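/- For every finitely supported real sequence (u_n)_{n≥0} with u_0 = u_1 = 0, the sharp discrete Rellich inequality holds: ∑_{n≥1} (Δu_n)² ≥ (9/16) ∑_{n≥2} u_n²/n⁴, where Δu_n = 2u_n − u_{n+1} − u_{n-1}. -/

import Mathlib

/-!
Two discrete Hardy inequalities are chained, each proved by the ground state method: if `G > 0`
then `∑ a_n (V_{n+1} - V_n)² ≥ ∑ W_n V_{n+1}²` for the weight `W = -∇·(a ∇G) / G`, because the
difference is a sum of squares after summation by parts. With `v = ∇u`, the pair `a = 1, G = √n`
gives `∑ (Δu)² ≥ ¼ ∑ v_{n+1}² / (n+1)²`, and then `a_n = 1/(n+1)², G = n^{3/2}` gives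
`∑ v_{n+1}² / (n+1)² ≥ 9/4 ∑ u_{n+2}² / (n+2)⁴`. The two weight estimates reduce, after scaling
by `x = n + 1`, to the third order Taylor upper bounds for `√(1 ± t)` with `t = 1/x`.
-/

open Real Finset

theorem sqrt_one_add_le {t : ℝ} (ht : 0 ≤ t) :
    √(1 + t) ≤ 1 + t / 2 - t ^ 2 / 8 + t ^ 3 / 16 := by
  rw [sqrt_le_left (by nlinarith [mul_nonneg ht (sq_nonneg (t - 1))])]
  nlinarith [mul_nonneg (pow_nonneg ht 4) (sq_nonneg (t - 2))]

theorem sqrt_one_sub_le {t : ℝ} (ht : 0 ≤ t) (ht1 : t ≤ 1) :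
    √(1 - t) ≤ 1 - t / 2 - t ^ 2 / 8 - t ^ 3 / 16 := by
  rw [sqrt_le_left (by nlinarith)]
  nlinarith [pow_nonneg ht 3, pow_nonneg ht 4, pow_nonneg ht 5, mul_nonneg ht (sub_nonneg.2 ht1)]

theorem sq_div_four_le_two_sub_sqrt_sub_sqrt {t : ℝ} (ht : 0 ≤ t) (ht1 : t ≤ 1) :
    t ^ 2 / 4 ≤ 2 - √(1 + t) - √(1 - t) := by
  linarith [sqrt_one_add_le ht, sqrt_one_sub_le ht ht1]

theorem nine_mul_sq_div_four_le {t : ℝ} (ht : 0 ≤ t) (ht1 : t ≤ 1) :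
    9 * t ^ 2 / 4 ≤
      (1 + t) ^ 4 * (1 - (1 - t) * √(1 - t)) - (1 + t) ^ 2 * ((1 + t) * √(1 + t) - 1) := by
  have h1t : (0 : ℝ) ≤ 1 + t := by linarith
  have hs := mul_le_mul_of_nonneg_left (sqrt_one_sub_le ht ht1)
    (mul_nonneg (pow_nonneg h1t 4) (sub_nonneg.2 ht1))
  have hq := mul_le_mul_of_nonneg_left (sqrt_one_add_le ht) (pow_nonneg h1t 3)
  nlinarith [pow_nonneg ht 3, pow_nonneg ht 4, pow_nonneg ht 5, pow_nonneg ht 6,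
    pow_nonneg ht 7, mul_nonneg ht (sub_nonneg.2 ht1)]

theorem sqrt_add_eq_mul_sqrt {x : ℝ} (hx : 0 < x) (y : ℝ) : √(x + y) = √x * √(1 + y / x) := by
  rw [← sqrt_mul hx.le]
  congr 1
  field_simp

theorem sqrt_sub_eq_mul_sqrt {x : ℝ} (hx : 0 < x) (y : ℝ) : √(x - y) = √x * √(1 - y / x) := by
  simpa [sub_eq_add_neg, neg_div] using sqrt_add_eq_mul_sqrt hx (-y)

theorem one_div_four_sq_le {x : ℝ} (hx : 1 ≤ x) :
    1 / (4 * x ^ 2) ≤ (2 * √x - √(x + 1) - √(x - 1)) / √x := by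
  have hx0 : 0 < x := by linarith
  have hr : 0 < √x := sqrt_pos.2 hx0
  have key := sq_div_four_le_two_sub_sqrt_sub_sqrt (t := 1 / x) (by positivity)
    ((div_le_one hx0).2 hx)
  rw [sqrt_add_eq_mul_sqrt hx0, sqrt_sub_eq_mul_sqrt hx0]
  convert key using 1 <;> field_simp

theorem nine_div_four_pow_four_le {x : ℝ} (hx : 1 ≤ x) :
    9 / (4 * (x + 1) ^ 4) ≤ (1 / x ^ 2 * (x * √x - (x - 1) * √(x - 1))
      - 1 / (x + 1) ^ 2 * ((x + 1) * √(x + 1) - x * √x)) / (x * √x) := by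
  have hx0 : 0 < x := by linarith
  have hr : 0 < √x := sqrt_pos.2 hx0
  have key := nine_mul_sq_div_four_le (t := 1 / x) (by positivity) ((div_le_one hx0).2 hx)
  rw [sqrt_add_eq_mul_sqrt hx0, sqrt_sub_eq_mul_sqrt hx0]
  generalize √(1 - 1 / x) = s at key ⊢
  generalize √(1 + 1 / x) = q at key ⊢
  refine le_of_eq_of_le ?_ ((div_le_div_of_nonneg_right key
    (by positivity : (0 : ℝ) ≤ x ^ 2 * (1 + 1 / x) ^ 4)).trans_eq ?_) <;>
    rw [div_eq_div_iff (by positivity) (by positivity)] <;> field_simp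

/-- The weight `-∇·(a ∇G) / G` at the point `n + 1`. -/
noncomputable def hardyWeight (a G : ℕ → ℝ) (n : ℕ) : ℝ :=
  (a n * (G (n + 1) - G n) - a (n + 1) * (G (n + 2) - G (n + 1))) / G (n + 1)

theorem one_div_four_sq_le_hardyWeight_sqrt (n : ℕ) :
    1 / (4 * ((n : ℝ) + 1) ^ 2) ≤ hardyWeight 1 (fun n => √(n : ℝ)) n := by
  convert one_div_four_sq_le (x := (n : ℝ) + 1) (by simp) using 1
  simp only [hardyWeight, Pi.one_apply]
  push_cast
  ring_nf

theorem nine_div_four_pow_four_le_hardyWeight_mul_sqrt (n : ℕ) :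
    9 / (4 * ((n : ℝ) + 2) ^ 4) ≤
      hardyWeight (fun n => 1 / ((n : ℝ) + 1) ^ 2) (fun n => n * √(n : ℝ)) n := by
  convert nine_div_four_pow_four_le (x := (n : ℝ) + 1) (by simp) using 1
  · ring_nf
  simp only [hardyWeight]
  push_cast
  ring_nf

theorem ground_state_edge_le {a G G' V V' : ℝ} (ha : 0 ≤ a) (hG : 0 ≤ G) (hG' : 0 < G')
    (hV : V = 0 ∨ 0 < G) :
    a * (G' - G) * (V' ^ 2 / G' - V ^ 2 / G) ≤ a * (V' - V) ^ 2 := by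
  rw [← sub_nonneg]
  rcases hV with rfl | hGpos
  · have h : a * (V' - 0) ^ 2 - a * (G' - G) * (V' ^ 2 / G' - 0 ^ 2 / G) = a * G * V' ^ 2 / G' := by
      field_simp
      ring
    rw [h]
    positivity
  · have h : a * (V' - V) ^ 2 - a * (G' - G) * (V' ^ 2 / G' - V ^ 2 / G)
        = a * (G * V' - G' * V) ^ 2 / (G * G') := by
      field_simp
      ring
    rw [h]
    positivity

theorem sum_range_mul_sub_by_parts (b w : ℕ → ℝ) (N : ℕ) :
    ∑ n ∈ range N, b n * (w (n + 1) - w n)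
      = ∑ n ∈ range N, (b n - b (n + 1)) * w (n + 1) + (b N * w N - b 0 * w 0) := by
  induction N with
  | zero => simp
  | succ N ih =>
    rw [sum_range_succ, sum_range_succ, ih]
    ring

theorem sum_hardyWeight_mul_sq_le (a G V : ℕ → ℝ) (N : ℕ) (ha : ∀ n, 0 ≤ a n)
    (hG0 : 0 ≤ G 0) (hG : ∀ n, 0 < G (n + 1)) (hV0 : V 0 = 0) (hVN : V N = 0) :
    ∑ n ∈ range N, hardyWeight a G n * V (n + 1) ^ 2 ≤
      ∑ n ∈ range N, a n * (V (n + 1) - V n) ^ 2 := by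
  set b : ℕ → ℝ := fun n => a n * (G (n + 1) - G n)
  set w : ℕ → ℝ := fun n => V n ^ 2 / G n
  have hparts : ∑ n ∈ range N, hardyWeight a G n * V (n + 1) ^ 2
      = ∑ n ∈ range N, b n * (w (n + 1) - w n) := by
    rw [sum_range_mul_sub_by_parts b w N]
    simp [b, w, hardyWeight, hV0, hVN, mul_div_assoc', div_mul_eq_mul_div]
  rw [hparts]
  refine sum_le_sum fun n _ => ground_state_edge_le (ha n) ?_ (hG n) ?_
  · cases n with
    | zero => exact hG0
    | succ n => exact (hG n).le
  · cases n with
    | zero => exact .inl hV0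
    | succ n => exact .inr (hG n)

theorem rellich_sum_range (u : ℕ → ℝ) (N : ℕ) (h0 : u 0 = 0) (h1 : u 1 = 0)
    (hN : ∀ n ≥ N, u n = 0) :
    9 / 16 * ∑ n ∈ range N, u (n + 2) ^ 2 / ((n : ℝ) + 2) ^ 4
      ≤ ∑ n ∈ range N, (2 * u (n + 1) - u (n + 2) - u n) ^ 2 := by
  have hfirst := sum_hardyWeight_mul_sq_le 1 (fun n => √(n : ℝ)) (fun n => u (n + 1) - u n) N
    (fun _ => zero_le_one) (by simp) (fun n => by positivity) (by simp [h0, h1])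
    (by simp [hN N le_rfl, hN (N + 1) (by omega)])
  have hsecond := sum_hardyWeight_mul_sq_le (fun n => 1 / ((n : ℝ) + 1) ^ 2)
    (fun n => n * √(n : ℝ)) (fun n => u (n + 1)) N (fun n => by positivity) (by simp)
    (fun n => by positivity) h1 (hN _ (by omega))
  calc 9 / 16 * ∑ n ∈ range N, u (n + 2) ^ 2 / ((n : ℝ) + 2) ^ 4
      = 1 / 4 * ∑ n ∈ range N, 9 / (4 * ((n : ℝ) + 2) ^ 4) * u (n + 1 + 1) ^ 2 := by
        rw [mul_sum, mul_sum]
        refine sum_congr rfl fun n _ => ?_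
        field_simp
        ring
    _ ≤ 1 / 4 * ∑ n ∈ range N, hardyWeight (fun n => 1 / ((n : ℝ) + 1) ^ 2)
          (fun n => n * √(n : ℝ)) n * u (n + 1 + 1) ^ 2 := by
        gcongr with n
        exact nine_div_four_pow_four_le_hardyWeight_mul_sqrt n
    _ ≤ 1 / 4 * ∑ n ∈ range N, 1 / ((n : ℝ) + 1) ^ 2 * (u (n + 1 + 1) - u (n + 1)) ^ 2 := by
        gcongr
    _ = ∑ n ∈ range N, 1 / (4 * ((n : ℝ) + 1) ^ 2) * (u (n + 1 + 1) - u (n + 1)) ^ 2 := by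
        rw [mul_sum]
        refine sum_congr rfl fun n _ => ?_
        field_simp
    _ ≤ ∑ n ∈ range N, hardyWeight 1 (fun n => √(n : ℝ)) n * (u (n + 1 + 1) - u (n + 1)) ^ 2 := by
        gcongr with n
        exact one_div_four_sq_le_hardyWeight_sqrt n
    _ ≤ ∑ n ∈ range N, (1 : ℕ → ℝ) n * (u (n + 1 + 1) - u (n + 1) - (u (n + 1) - u n)) ^ 2 :=
        hfirst
    _ = ∑ n ∈ range N, (2 * u (n + 1) - u (n + 2) - u n) ^ 2 := by
        refine sum_congr rfl fun n _ => ?_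
        simp only [Pi.one_apply]
        ring

/-- Sharp second order discrete Rellich inequality:
`∑_{n≥1} (Δu_n)² ≥ (9/16) ∑_{n≥2} u_n²/n⁴` where `Δu_n = 2u_n − u_{n+1} − u_{n-1}`. -/
theorem discrete_rellich_order_two (u : ℕ → ℝ) (hfin : ∃ N, ∀ n ≥ N, u n = 0)
    (h0 : u 0 = 0) (h1 : u 1 = 0) :
    ∑' n : ℕ, (2 * u (n + 1) - u (n + 2) - u n) ^ 2 ≥
      (9 / 16) * ∑' n : ℕ, (u (n + 2)) ^ 2 / ((n : ℝ) + 2) ^ 4 := by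
  obtain ⟨N, hN⟩ := hfin
  have hvanish : ∀ n ∉ range N, ∀ k, u (n + k) = 0 := fun n hn k =>
    hN _ (by simp at hn; omega)
  rw [tsum_eq_sum (s := range N) fun n hn => by simpa [hvanish n hn] using hvanish n hn 0,
    tsum_eq_sum (s := range N) fun n hn => by simp [hvanish n hn 2]]
  exact rellich_sum_range u N h0 h1 hN
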